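/- arXiv:math-ph/0611075 — 3 statements merged into one kernel-verified Lean document; each statement's English description precedes it below -/
import Mathlib

section
/- For any real vectors s, s' in R^3, the absolute value of (χ_{|s-s'| ≥ 1}/|s-s'| − η_{−1}(s)) is at most 2·η_2(s')·η_{−2}(s), where η_α(r) = 1 if |r| ≤ 1 and η_α(r) = |r|^α if |r| > 1, and χ denotes the characteristic function. -/
noncomputable def eta {n : ℕ} (α : ℝ) (r : EuclideanSpace ℝ (Fin n)) : ℝ :=
  if ‖r‖ ≤ 1 then 1 else ‖r‖ ^ α

theorem multipole_pointwise_bound (s s' : EuclideanSpace ℝ (Fin 3)) :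
    |(if 1 ≤ ‖s - s'‖ then 1 / ‖s - s'‖ else 0) - eta (-1) s| ≤
      2 * eta 2 s' * eta (-2) s := by
  set a := ‖s‖ with hA
  set b := ‖s'‖ with hB
  set d := ‖s - s'‖ with hD
  have ha0 : 0 ≤ a := norm_nonneg _
  have hb0 : 0 ≤ b := norm_nonneg _
  have hd0 : 0 ≤ d := norm_nonneg _
  have h1 : a ≤ d + b := by
    have := norm_add_le (s - s') s'
    simpa using this
  have h2 : d ≤ a + b := norm_sub_le s s'
  have hE : (1:ℝ) ≤ eta 2 s' := by
    unfold eta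
    split_ifs with hb
    · exact le_rfl
    · push_neg at hb
      rw [show b ^ (2:ℝ) = b ^ 2 by rw [← Real.rpow_natCast b 2]; norm_num]
      nlinarith
  by_cases ha : a ≤ 1
  · -- RHS ≥ 2, LHS ≤ 1
    have hm1 : eta (-1) s = 1 := by unfold eta; rw [if_pos ha]
    have hm2 : eta (-2) s = 1 := by unfold eta; rw [if_pos ha]
    rw [hm1, hm2]
    have hL : |(if 1 ≤ d then 1 / d else 0) - 1| ≤ 1 := by
      rw [abs_le]
      split_ifs with hd
      · have hd' : 0 < d := lt_of_lt_of_le one_pos hd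
        have h3 : 0 < 1 / d := by positivity
        have h4 : 1 / d ≤ 1 := by rw [div_le_one hd']; linarith
        constructor <;> linarith
      · norm_num
    nlinarith
  · push_neg at ha
    have ha0' : 0 < a := lt_trans one_pos ha
    have hm1 : eta (-1) s = a⁻¹ := by
      unfold eta; rw [if_neg (not_le.mpr ha), Real.rpow_neg_one]
    have hm2 : eta (-2) s = (a ^ 2)⁻¹ := by
      unfold eta
      rw [if_neg (not_le.mpr ha), Real.rpow_neg ha0, ← Real.rpow_natCast a 2]
      norm_num
    rw [hm1, hm2]
    by_cases hd1 : 1 ≤ d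
    · -- far case
      have hd' : 0 < d := lt_of_lt_of_le one_pos hd1
      rw [if_pos hd1]
      have hab : |a - d| ≤ b := by
        rw [abs_le]; constructor <;> linarith
      have hkey : a * b ≤ 2 * eta 2 s' * d := by
        unfold eta
        split_ifs with hb
        · nlinarith
        · push_neg at hb
          rw [show b ^ (2:ℝ) = b ^ 2 by rw [← Real.rpow_natCast b 2]; norm_num]
          nlinarith [mul_le_mul_of_nonneg_right h1 hb0,
            mul_le_mul_of_nonneg_left hd1 (mul_nonneg hb0 hb0),
            mul_le_mul_of_nonneg_left hb.le (mul_nonneg hd0 hb0)]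
      have habs : |1 / d - a⁻¹| = |a - d| / (d * a) := by
        rw [inv_eq_one_div, div_sub_div _ _ hd'.ne' ha0'.ne', one_mul, mul_one,
          abs_div, abs_of_pos (mul_pos hd' ha0')]
      rw [habs, show 2 * eta 2 s' * (a ^ 2)⁻¹ = (2 * eta 2 s') / a ^ 2 by ring,
        div_le_div_iff₀ (by positivity) (by positivity)]
      nlinarith [mul_le_mul_of_nonneg_right hab (by positivity : (0:ℝ) ≤ a ^ 2),
        mul_le_mul_of_nonneg_right hkey ha0]
    · -- near case
      rw [if_neg hd1]
      push_neg at hd1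
      have hkey : a ≤ 2 * eta 2 s' := by
        unfold eta
        split_ifs with hb
        · linarith
        · push_neg at hb
          rw [show b ^ (2:ℝ) = b ^ 2 by rw [← Real.rpow_natCast b 2]; norm_num]
          nlinarith
      rw [zero_sub, abs_neg, abs_of_pos (by positivity),
        show 2 * eta 2 s' * (a ^ 2)⁻¹ = (2 * eta 2 s') / a ^ 2 by ring,
        inv_eq_one_div, div_le_div_iff₀ (by positivity) (by positivity)]
      nlinarith
end

section
/- Let a > 0 and n > 0. The integral ∫_{4n}^∞ e^{−a√(t−n)} t² dt is finite, and the quantity (n/27) e^{a√(2n)} ∫_{4n}^∞ e^{−a√(t−n)} t² dt tends to 0 faster than n² as n → ∞; in particular its square root is o(n). -/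
/-!
Split `e^{-a√(t-n)} = e^{-(9/10)a√(t-n)} e^{-(a/10)√(t-n)}`. On `t > 4n` the first factor is at
most `e^{-(9/10)a√(3n)}`, and the second, being `O((t-n)^{-4}) = O(t^{-4})`, makes the integrand
`O(t^{-2})`. Hence the tail integral is `O(e^{-(9/10)a√(3n)} / n)`, and since
`√2 + 1/20 ≤ (9/10)√3` the whole quantity under the square root is `O(e^{-(a/20)√n})`.
-/

open MeasureTheory Filter Real Set Topology
open scoped Nat

lemma exp_neg_le_factorial_div_pow {x : ℝ} (hx : 0 < x) (k : ℕ) : exp (-x) ≤ k ! / x ^ k := by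
  calc exp (-x) = 1 / exp x := by rw [exp_neg, one_div]
    _ ≤ 1 / (x ^ k / k !) :=
      one_div_le_one_div_of_le (by positivity) (pow_div_factorial_le_exp x hx.le k)
    _ = k ! / x ^ k := one_div_div _ _

lemma exp_neg_mul_sqrt_sub_mul_sq_le {c n t : ℝ} (hc : 0 < c) (hn : 0 ≤ n) (ht : 4 * n < t) :
    exp (-(c * √(t - n))) * t ^ 2 ≤ 8 ! * (4 / 3) ^ 4 / c ^ 8 * t ^ (-2 : ℝ) := by
  have ht0 : 0 < t := by linarith
  have htn : 0 < t - n := by linarith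
  have hpow : (c * √(t - n)) ^ 8 = c ^ 8 * (t - n) ^ 4 := by
    rw [mul_pow, show 8 = 2 * 4 by rfl, pow_mul √(t - n), sq_sqrt htn.le]
  have hquartic : (3 / 4 * t) ^ 4 ≤ (t - n) ^ 4 := pow_le_pow_left₀ (by positivity) (by linarith) 4
  rw [rpow_neg ht0.le, rpow_two, ← div_eq_mul_inv, le_div_iff₀ (by positivity), mul_assoc, ← sq,
    ← pow_mul]
  calc exp (-(c * √(t - n))) * t ^ (2 * 2)
      ≤ 8 ! / (c ^ 8 * (t - n) ^ 4) * t ^ 4 := by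
        rw [← hpow]
        gcongr
        exact exp_neg_le_factorial_div_pow (by positivity) 8
    _ ≤ 8 ! / (c ^ 8 * (3 / 4 * t) ^ 4) * t ^ 4 := by gcongr
    _ = 8 ! * (4 / 3) ^ 4 / c ^ 8 := by field_simp

lemma tendsto_exp_neg_mul_sqrt_atTop {b : ℝ} (hb : 0 < b) :
    Tendsto (fun x => exp (-b * √x)) atTop (𝓝 0) :=
  tendsto_exp_atBot.comp (tendsto_sqrt_atTop.const_mul_atTop_of_neg (neg_neg_of_pos hb))

lemma sqrt_two_add_one_div_twenty_le : √2 + 1 / 20 ≤ 9 / 10 * √3 := by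
  have h2 : √2 ^ 2 = 2 := sq_sqrt (by norm_num)
  have h3 : √3 ^ 2 = 3 := sq_sqrt (by norm_num)
  nlinarith [sqrt_nonneg 2, sqrt_nonneg 3, sq_nonneg (√2 - 29 / 20), sq_nonneg (√3 - 17 / 10)]

section

variable {a n : ℝ}

lemma tail_integrand_le (ha : 0 < a) (hn : 0 < n) {t : ℝ} (ht : t ∈ Ioi (4 * n)) :
    exp (-a * √(t - n)) * t ^ 2 ≤
      exp (-(9 / 10 * a) * √(3 * n)) * (8 ! * (4 / 3) ^ 4 / (a / 10) ^ 8) * t ^ (-2 : ℝ) := by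
  have hsqrt : √(3 * n) ≤ √(t - n) := sqrt_le_sqrt (by rw [mem_Ioi] at ht; linarith)
  calc exp (-a * √(t - n)) * t ^ 2
      = exp (-(9 / 10 * a) * √(t - n)) * (exp (-(a / 10 * √(t - n))) * t ^ 2) := by
        rw [← mul_assoc, ← exp_add]; ring_nf
    _ ≤ exp (-(9 / 10 * a) * √(3 * n)) * (8 ! * (4 / 3) ^ 4 / (a / 10) ^ 8 * t ^ (-2 : ℝ)) := by
        gcongr ?_ * ?_
        · exact exp_le_exp.mpr (by nlinarith)
        · exact exp_neg_mul_sqrt_sub_mul_sq_le (by positivity) hn.le ht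
    _ = _ := by ring

lemma integrableOn_tail_integrand (ha : 0 < a) (hn : 0 < n) :
    IntegrableOn (fun t => exp (-a * √(t - n)) * t ^ 2) (Ioi (4 * n)) := by
  have hbound :=
    (integrableOn_Ioi_rpow_of_lt (a := -2) (by norm_num) (by positivity : 0 < 4 * n)).const_mul
      (exp (-(9 / 10 * a) * √(3 * n)) * (8 ! * (4 / 3) ^ 4 / (a / 10) ^ 8))
  refine hbound.mono' (by fun_prop) ?_
  filter_upwards [self_mem_ae_restrict measurableSet_Ioi] with t ht
  rw [norm_of_nonneg (by positivity)]
  exact tail_integrand_le ha hn ht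

lemma integral_tail_integrand_le (ha : 0 < a) (hn : 0 < n) :
    ∫ t in Ioi (4 * n), exp (-a * √(t - n)) * t ^ 2 ≤
      exp (-(9 / 10 * a) * √(3 * n)) * (8 ! * (4 / 3) ^ 4 / (a / 10) ^ 8) / (4 * n) := by
  have h4n : 0 < 4 * n := by positivity
  calc ∫ t in Ioi (4 * n), exp (-a * √(t - n)) * t ^ 2
      ≤ ∫ t in Ioi (4 * n),
          exp (-(9 / 10 * a) * √(3 * n)) * (8 ! * (4 / 3) ^ 4 / (a / 10) ^ 8) * t ^ (-2 : ℝ) :=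
        setIntegral_mono_on (integrableOn_tail_integrand ha hn)
          ((integrableOn_Ioi_rpow_of_lt (by norm_num) h4n).const_mul _) measurableSet_Ioi
          fun t ht => tail_integrand_le ha hn ht
    _ = _ := by
        rw [integral_const_mul, integral_Ioi_rpow_of_lt (by norm_num) h4n]
        norm_num [rpow_neg_one, div_eq_mul_inv]

lemma mul_sqrt_two_mul_sub_le (ha : 0 ≤ a) :
    a * √(2 * n) - 9 / 10 * a * √(3 * n) ≤ -(a / 20) * √n := by
  rw [sqrt_mul zero_le_two, sqrt_mul zero_le_three]
  nlinarith [mul_le_mul_of_nonneg_right sqrt_two_add_one_div_twenty_le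
    (mul_nonneg ha (sqrt_nonneg n))]

lemma exists_tail_quantity_le_mul_exp (ha : 0 < a) :
    ∃ C, ∀ n > 0, n / 27 * exp (a * √(2 * n)) * ∫ t in Ioi (4 * n), exp (-a * √(t - n)) * t ^ 2 ≤
      C * exp (-(a / 20) * √n) := by
  refine ⟨8 ! * (4 / 3) ^ 4 / (a / 10) ^ 8 / 108, fun n hn => ?_⟩
  calc n / 27 * exp (a * √(2 * n)) * ∫ t in Ioi (4 * n), exp (-a * √(t - n)) * t ^ 2
      ≤ n / 27 * exp (a * √(2 * n)) *
          (exp (-(9 / 10 * a) * √(3 * n)) * (8 ! * (4 / 3) ^ 4 / (a / 10) ^ 8) / (4 * n)) := by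
        gcongr
        exact integral_tail_integrand_le ha hn
    _ = 8 ! * (4 / 3) ^ 4 / (a / 10) ^ 8 / 108 *
          exp (a * √(2 * n) - 9 / 10 * a * √(3 * n)) := by
        rw [sub_eq_add_neg, exp_add, neg_mul]
        field_simp
        ring
    _ ≤ 8 ! * (4 / 3) ^ 4 / (a / 10) ^ 8 / 108 * exp (-(a / 20) * √n) := by
        gcongr
        exact mul_sqrt_two_mul_sub_le ha.le

end

theorem green_function_tail_integral (a : ℝ) (ha : 0 < a) :
    (∀ n : ℝ, 0 < n → IntegrableOn
      (fun t => Real.exp (-a * Real.sqrt (t - n)) * t ^ 2) (Set.Ioi (4 * n)) volume) ∧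
    Tendsto (fun n : ℝ => Real.sqrt (n / 27 * Real.exp (a * Real.sqrt (2 * n)) *
        ∫ t in Set.Ioi (4 * n), Real.exp (-a * Real.sqrt (t - n)) * t ^ 2) / n)
      atTop (nhds 0) := by
  refine ⟨fun n hn => integrableOn_tail_integrand ha hn, ?_⟩
  obtain ⟨C, hC⟩ := exists_tail_quantity_le_mul_exp ha
  have hbound : Tendsto (fun n => √(C * exp (-(a / 20) * √n))) atTop (𝓝 0) := by
    simpa using ((tendsto_exp_neg_mul_sqrt_atTop (by positivity)).const_mul C).sqrt
  have hsqrt := tendsto_of_tendsto_of_tendsto_of_le_of_le' tendsto_const_nhds hbound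
    (.of_forall fun n => sqrt_nonneg _)
    ((eventually_gt_atTop 0).mono fun n hn => sqrt_le_sqrt (hC n hn))
  exact hsqrt.div_atTop tendsto_id
end

section
/- Let G be a bounded operator on L²(R^3) with a positive integral kernel and suppose ‖G χ_n‖ ≤ b n for all integers n ≥ 1, where χ_n is multiplication by the indicator of the ball of radius n and b > 0. Then for any α > 3/2, ‖G η_{−α}‖ ≤ b (1 + Σ_{n=2}^∞ n²(n−1)^{−2α})^{1/2} < ∞, where η_{−α}(x) = min(1, |x|^{−α}). -/
/-!
Cut `f` into its pieces on the shells `n < ‖x‖ ≤ n + 1`. The pieces are mutually orthogonal; on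
the `n`-th one `η` is at most `max 1 n ^ (-α)`, and `G` sees only its restriction to the ball of
radius `n + 1`, which costs `b (n + 1)`. Cauchy–Schwarz over the shells bounds `‖G η χ_N f‖`
uniformly in `N`, while the remainder `G η (1 - χ_N) f` has norm at most `‖G‖ N^(-α) ‖f‖ → 0`.
-/

open MeasureTheory RealInnerProductSpace Filter Topology Finset

section Hilbert

variable {E F : Type*} [NormedAddCommGroup E] [InnerProductSpace ℝ E]
  [NormedAddCommGroup F] [NormedSpace ℝ F] {ι : Type*}

theorem norm_sum_sq_eq_sum_norm_sq_of_pairwise {s : Finset ι} {v : ι → E}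
    (hv : (s : Set ι).Pairwise fun i j => ⟪v i, v j⟫ = 0) :
    ‖∑ i ∈ s, v i‖ ^ 2 = ∑ i ∈ s, ‖v i‖ ^ 2 := by
  rw [← real_inner_self_eq_norm_sq, sum_inner]
  refine sum_congr rfl fun i hi => ?_
  rw [inner_sum, sum_eq_single i (fun j hj hji => hv hi hj hji.symm) (absurd hi),
    real_inner_self_eq_norm_sq]

theorem ContinuousLinearMap.norm_map_sum_le_of_pairwise (T : E →L[ℝ] F) {s : Finset ι}
    {v : ι → E} (hv : (s : Set ι).Pairwise fun i j => ⟪v i, v j⟫ = 0) {w : ι → ℝ}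
    (hT : ∀ i ∈ s, ‖T (v i)‖ ≤ w i * ‖v i‖) :
    ‖T (∑ i ∈ s, v i)‖ ≤ √(∑ i ∈ s, w i ^ 2) * ‖∑ i ∈ s, v i‖ :=
  calc ‖T (∑ i ∈ s, v i)‖ ≤ ∑ i ∈ s, ‖T (v i)‖ := by rw [map_sum]; exact norm_sum_le _ _
    _ ≤ ∑ i ∈ s, w i * ‖v i‖ := sum_le_sum hT
    _ ≤ √(∑ i ∈ s, w i ^ 2) * √(∑ i ∈ s, ‖v i‖ ^ 2) := Real.sum_mul_le_sqrt_mul_sqrt _ _ _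
    _ = √(∑ i ∈ s, w i ^ 2) * ‖∑ i ∈ s, v i‖ := by
      rw [← norm_sum_sq_eq_sum_norm_sq_of_pairwise hv, Real.sqrt_sq (norm_nonneg _)]

end Hilbert

namespace MeasureTheory

variable {X : Type*} [MeasurableSpace X] {μ : Measure X}

theorem L2.inner_eq_zero_of_ae_support {u v : Lp ℝ 2 μ}
    (h : ∀ᵐ x ∂μ, u x ≠ 0 → v x = 0) : ⟪u, v⟫ = 0 := by
  rw [L2.inner_def, ← integral_zero X ℝ]
  refine integral_congr_ae ?_
  filter_upwards [h] with x hx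
  by_cases hu : u x = 0 <;> simp [hu, hx]

def IsMulOperator (M : Lp ℝ 2 μ →L[ℝ] Lp ℝ 2 μ) (g : X → ℝ) : Prop :=
  ∀ f : Lp ℝ 2 μ, (M f : X → ℝ) =ᵐ[μ] fun x => g x * f x

namespace IsMulOperator

variable {M : Lp ℝ 2 μ →L[ℝ] Lp ℝ 2 μ} {g : X → ℝ}

theorem ae_ne_zero_of_apply_ne_zero (hM : IsMulOperator M g) (u : Lp ℝ 2 μ) :
    ∀ᵐ x ∂μ, M u x ≠ 0 → u x ≠ 0 := by
  filter_upwards [hM u] with x hx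
  rw [hx]
  exact right_ne_zero_of_mul

theorem norm_apply_le (hM : IsMulOperator M g) {u : Lp ℝ 2 μ} {c : ℝ}
    (h : ∀ᵐ x ∂μ, u x ≠ 0 → |g x| ≤ c) : ‖M u‖ ≤ c * ‖u‖ := by
  refine Lp.norm_le_mul_norm_of_ae_le_mul ?_
  filter_upwards [hM u, h] with x hx hxc
  rw [hx, norm_mul, Real.norm_eq_abs]
  by_cases hu : u x = 0
  · simp [hu]
  · exact mul_le_mul_of_nonneg_right (hxc hu) (norm_nonneg _)

end IsMulOperator

variable [NormedAddCommGroup X]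

def IsBallCutoff (μ : Measure X) (M : ℕ → Lp ℝ 2 μ →L[ℝ] Lp ℝ 2 μ) : Prop :=
  ∀ (n : ℕ) (f : Lp ℝ 2 μ), (M n f : X → ℝ) =ᵐ[μ] fun x => if ‖x‖ ≤ (n : ℝ) then f x else 0

namespace IsBallCutoff

variable {M : ℕ → Lp ℝ 2 μ →L[ℝ] Lp ℝ 2 μ}

theorem apply_zero [NullSingletonClass μ] (hM : IsBallCutoff μ M) (f : Lp ℝ 2 μ) :
    M 0 f = 0 := by
  refine Lp.ext ((hM 0 f).trans ?_ |>.trans (Lp.coeFn_zero ℝ 2 μ).symm)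
  filter_upwards [μ.ae_ne 0] with x hx
  simp [hx]

theorem sum_range_sub [NullSingletonClass μ] (hM : IsBallCutoff μ M) (f : Lp ℝ 2 μ) (N : ℕ) :
    ∑ n ∈ range N, (M (n + 1) f - M n f) = M N f := by
  rw [Finset.sum_range_sub (fun n => M n f), hM.apply_zero, sub_zero]

theorem norm_apply_le (hM : IsBallCutoff μ M) (n : ℕ) (f : Lp ℝ 2 μ) : ‖M n f‖ ≤ ‖f‖ := by
  refine Lp.norm_le_norm_of_ae_le ?_
  filter_upwards [hM n f] with x hx
  rw [hx]
  split_ifs <;> simp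

theorem norm_sub_apply_le (hM : IsBallCutoff μ M) (n : ℕ) (f : Lp ℝ 2 μ) :
    ‖f - M n f‖ ≤ ‖f‖ := by
  refine Lp.norm_le_norm_of_ae_le ?_
  filter_upwards [Lp.coeFn_sub f (M n f), hM n f] with x hsub hx
  rw [hsub, Pi.sub_apply, hx]
  split_ifs <;> simp

theorem ae_lt_norm_of_sub_apply_ne_zero (hM : IsBallCutoff μ M) (n : ℕ) (f : Lp ℝ 2 μ) :
    ∀ᵐ x ∂μ, (f - M n f) x ≠ 0 → (n : ℝ) < ‖x‖ := by
  filter_upwards [Lp.coeFn_sub f (M n f), hM n f] with x hsub hx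
  rw [hsub, Pi.sub_apply, hx]
  split_ifs with h
  · simp
  · exact fun _ => lt_of_not_ge h

theorem ae_mem_shell (hM : IsBallCutoff μ M) (n : ℕ) (f : Lp ℝ 2 μ) :
    ∀ᵐ x ∂μ, (M (n + 1) f - M n f) x ≠ 0 → (n : ℝ) < ‖x‖ ∧ ‖x‖ ≤ n + 1 := by
  filter_upwards [Lp.coeFn_sub (M (n + 1) f) (M n f), hM (n + 1) f, hM n f]
    with x hsub hx₁ hx
  rw [hsub, Pi.sub_apply, hx₁, hx]
  push_cast
  split_ifs with h₁ h
  · simp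
  · exact fun _ => ⟨lt_of_not_ge h, h₁⟩
  · exact absurd (by linarith) h₁
  · simp

theorem apply_eq_self (hM : IsBallCutoff μ M) {n : ℕ} {u : Lp ℝ 2 μ}
    (h : ∀ᵐ x ∂μ, u x ≠ 0 → ‖x‖ ≤ n) : M n u = u := by
  refine Lp.ext ?_
  filter_upwards [hM n u, h] with x hx hxn
  rw [hx]
  split_ifs with hn
  · rfl
  · by_contra hu
    exact hn (hxn (Ne.symm hu))

theorem inner_shell_eq_zero (hM : IsBallCutoff μ M) (f : Lp ℝ 2 μ) {m n : ℕ} (hmn : m ≠ n) :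
    ⟪M (m + 1) f - M m f, M (n + 1) f - M n f⟫ = 0 := by
  refine L2.inner_eq_zero_of_ae_support ?_
  filter_upwards [hM.ae_mem_shell m f, hM.ae_mem_shell n f] with x hm hn hxm
  by_contra hxn
  obtain ⟨hm₁, hm₂⟩ := hm hxm
  obtain ⟨hn₁, hn₂⟩ := hn hxn
  have : m < n + 1 := by exact_mod_cast hm₁.trans_le hn₂
  have : n < m + 1 := by exact_mod_cast hn₁.trans_le hm₂
  omega

variable {Mg : Lp ℝ 2 μ →L[ℝ] Lp ℝ 2 μ} {g : X → ℝ} {c : ℕ → ℝ}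
  {F : Type*} [NormedAddCommGroup F] [NormedSpace ℝ F] {G : Lp ℝ 2 μ →L[ℝ] F} {b : ℝ}

theorem norm_apply_shell_le (hM : IsBallCutoff μ M) (hMg : IsMulOperator Mg g)
    (hgc : ∀ (n : ℕ) x, (n : ℝ) < ‖x‖ → |g x| ≤ c n) {n : ℕ}
    (hGM : ‖G.comp (M (n + 1))‖ ≤ b * (n + 1)) (f : Lp ℝ 2 μ) :
    ‖G (Mg (M (n + 1) f - M n f))‖ ≤ b * ((n + 1) * c n) * ‖M (n + 1) f - M n f‖ := by
  set u := M (n + 1) f - M n f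
  have hfix : M (n + 1) (Mg u) = Mg u := by
    refine hM.apply_eq_self ?_
    filter_upwards [hMg.ae_ne_zero_of_apply_ne_zero u, hM.ae_mem_shell n f] with x hgu hu hx
    exact_mod_cast (hu (hgu hx)).2
  have hMgu : ‖Mg u‖ ≤ c n * ‖u‖ := by
    refine hMg.norm_apply_le ?_
    filter_upwards [hM.ae_mem_shell n f] with x hu hx
    exact hgc n x (hu hx).1
  calc ‖G (Mg u)‖ = ‖G.comp (M (n + 1)) (Mg u)‖ := by rw [G.comp_apply, hfix]
    _ ≤ ‖G.comp (M (n + 1))‖ * ‖Mg u‖ := (G.comp _).le_opNorm _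
    _ ≤ (b * (n + 1)) * (c n * ‖u‖) :=
      mul_le_mul hGM hMgu (norm_nonneg _) ((norm_nonneg _).trans hGM)
    _ = b * ((n + 1) * c n) * ‖u‖ := by ring

theorem norm_apply_ball_le [NullSingletonClass μ] (hM : IsBallCutoff μ M)
    (hMg : IsMulOperator Mg g) (hgc : ∀ (n : ℕ) x, (n : ℝ) < ‖x‖ → |g x| ≤ c n)
    (hw : Summable fun n : ℕ => ((n + 1 : ℝ) * c n) ^ 2) (hb : 0 ≤ b)
    (hGM : ∀ n : ℕ, ‖G.comp (M (n + 1))‖ ≤ b * (n + 1)) (f : Lp ℝ 2 μ) (N : ℕ) :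
    ‖G (Mg (M N f))‖ ≤ b * √(∑' n : ℕ, ((n + 1 : ℝ) * c n) ^ 2) * ‖f‖ := by
  have hshells := (G.comp Mg).norm_map_sum_le_of_pairwise (s := range N)
    (fun m _ n _ hmn => hM.inner_shell_eq_zero f hmn)
    (fun n _ => hM.norm_apply_shell_le hMg hgc (hGM n) f)
  rw [G.comp_apply, hM.sum_range_sub] at hshells
  refine hshells.trans (mul_le_mul ?_ (hM.norm_apply_le N f) (norm_nonneg _) (by positivity))
  calc √(∑ n ∈ range N, (b * ((n + 1) * c n)) ^ 2)
      = b * √(∑ n ∈ range N, ((n + 1 : ℝ) * c n) ^ 2) := by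
        simp_rw [mul_pow b, ← mul_sum]
        rw [Real.sqrt_mul (sq_nonneg b), Real.sqrt_sq hb]
    _ ≤ b * √(∑' n : ℕ, ((n + 1 : ℝ) * c n) ^ 2) := by
        gcongr
        exact hw.sum_le_tsum _ fun n _ => sq_nonneg _

theorem norm_comp_le [NullSingletonClass μ] (hM : IsBallCutoff μ M)
    (hMg : IsMulOperator Mg g) (hc : ∀ n, 0 ≤ c n)
    (hgc : ∀ (n : ℕ) x, (n : ℝ) < ‖x‖ → |g x| ≤ c n) (hc_lim : Tendsto c atTop (𝓝 0))
    (hw : Summable fun n : ℕ => ((n + 1 : ℝ) * c n) ^ 2)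
    (hGM : ∀ n : ℕ, ‖G.comp (M (n + 1))‖ ≤ b * (n + 1)) :
    ‖G.comp Mg‖ ≤ b * √(∑' n : ℕ, ((n + 1 : ℝ) * c n) ^ 2) := by
  have hb : 0 ≤ b := by simpa using (norm_nonneg _).trans (hGM 0)
  set C := b * √(∑' n : ℕ, ((n + 1 : ℝ) * c n) ^ 2)
  refine (G.comp Mg).opNorm_le_bound (by positivity) fun f => ?_
  have htail : ∀ N, ‖Mg (f - M N f)‖ ≤ c N * ‖f‖ := fun N =>
    (hMg.norm_apply_le (hM.ae_lt_norm_of_sub_apply_ne_zero N f |>.mono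
      fun x hx hne => hgc N x (hx hne))).trans
      (mul_le_mul_of_nonneg_left (hM.norm_sub_apply_le N f) (hc N))
  have hsplit : ∀ N, ‖G (Mg f)‖ ≤ C * ‖f‖ + ‖G‖ * (c N * ‖f‖) := fun N =>
    calc ‖G (Mg f)‖ = ‖G (Mg (M N f)) + G (Mg (f - M N f))‖ := by
          rw [← map_add, ← map_add, add_sub_cancel]
      _ ≤ C * ‖f‖ + ‖G‖ * (c N * ‖f‖) := norm_add_le_of_le
          (hM.norm_apply_ball_le hMg hgc hw hb hGM f N) (G.le_opNorm_of_le (htail N))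
  have hlim : Tendsto (fun N => C * ‖f‖ + ‖G‖ * (c N * ‖f‖)) atTop
      (𝓝 (C * ‖f‖ + ‖G‖ * (0 * ‖f‖))) :=
    tendsto_const_nhds.add ((hc_lim.mul_const _).const_mul _)
  simpa using ge_of_tendsto' hlim hsplit

end IsBallCutoff

end MeasureTheory

theorem ite_le_one_rpow_eq_max_rpow (t α : ℝ) :
    (if t ≤ 1 then 1 else t ^ (-α)) = max 1 t ^ (-α) := by
  split_ifs with h
  · rw [max_eq_left h, Real.one_rpow]
  · rw [max_eq_right (le_of_not_ge h)]

theorem abs_ite_le_one_rpow_le {α s t : ℝ} (hα : 0 ≤ α) (hst : s ≤ t) :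
    |if t ≤ 1 then 1 else t ^ (-α)| ≤ max 1 s ^ (-α) := by
  rw [ite_le_one_rpow_eq_max_rpow, abs_of_nonneg (by positivity)]
  exact Real.rpow_le_rpow_of_nonpos (by positivity) (max_le_max le_rfl hst) (neg_nonpos.2 hα)

theorem summable_add_two_sq_mul_add_one_rpow {α : ℝ} (hα : 3 / 2 < α) :
    Summable fun n : ℕ => ((n : ℝ) + 2) ^ 2 * ((n : ℝ) + 1) ^ (-(2 * α)) := by
  have hp : Summable fun n : ℕ => ((n : ℝ) + 1) ^ (2 - 2 * α) := by
    simpa using (summable_nat_add_iff 1).mpr (Real.summable_nat_rpow.mpr (by linarith))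
  refine .of_nonneg_of_le (fun n => by positivity) (fun n => ?_) (hp.mul_left 4)
  have hn : (0 : ℝ) < n + 1 := by positivity
  calc ((n : ℝ) + 2) ^ 2 * ((n : ℝ) + 1) ^ (-(2 * α))
      ≤ 4 * ((n : ℝ) + 1) ^ 2 * ((n : ℝ) + 1) ^ (-(2 * α)) := by gcongr; nlinarith
    _ = 4 * ((n : ℝ) + 1) ^ (2 - 2 * α) := by
      rw [mul_assoc, ← Real.rpow_natCast, ← Real.rpow_add hn]
      norm_num [sub_eq_add_neg]

theorem succ_mul_max_one_rpow_sq_succ (α : ℝ) (n : ℕ) :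
    ((((n + 1 : ℕ) : ℝ) + 1) * max 1 ((n + 1 : ℕ) : ℝ) ^ (-α)) ^ 2
      = ((n : ℝ) + 2) ^ 2 * ((n : ℝ) + 1) ^ (-(2 * α)) := by
  have hn : (0 : ℝ) ≤ n + 1 := by positivity
  push_cast
  rw [max_eq_right (by linarith), mul_pow, ← Real.rpow_natCast ((n + 1 : ℝ) ^ (-α)) 2,
    ← Real.rpow_mul hn]
  ring_nf

theorem summable_succ_mul_max_one_rpow_sq {α : ℝ} (hα : 3 / 2 < α) :
    Summable fun n : ℕ => ((n + 1 : ℝ) * max 1 (n : ℝ) ^ (-α)) ^ 2 :=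
  (summable_nat_add_iff 1).mp <| by
    simpa only [succ_mul_max_one_rpow_sq_succ] using summable_add_two_sq_mul_add_one_rpow hα

theorem tsum_succ_mul_max_one_rpow_sq {α : ℝ} (hα : 3 / 2 < α) :
    ∑' n : ℕ, ((n + 1 : ℝ) * max 1 (n : ℝ) ^ (-α)) ^ 2
      = 1 + ∑' n : ℕ, ((n : ℝ) + 2) ^ 2 * ((n : ℝ) + 1) ^ (-(2 * α)) := by
  rw [(summable_succ_mul_max_one_rpow_sq hα).tsum_eq_zero_add]
  simp only [succ_mul_max_one_rpow_sq_succ]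
  norm_num

theorem green_times_eta_bounded_general (α b : ℝ) (hα : 3 / 2 < α)
    (G : Lp ℝ 2 (volume : Measure (EuclideanSpace ℝ (Fin 3))) →L[ℝ]
         Lp ℝ 2 (volume : Measure (EuclideanSpace ℝ (Fin 3))))
    -- multiplication by the indicator of the ball of radius n
    (Mχ : ℕ → (Lp ℝ 2 (volume : Measure (EuclideanSpace ℝ (Fin 3))) →L[ℝ]
               Lp ℝ 2 (volume : Measure (EuclideanSpace ℝ (Fin 3)))))
    (hMχ : ∀ (n : ℕ) (f : Lp ℝ 2 (volume : Measure (EuclideanSpace ℝ (Fin 3)))),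
      (Mχ n f : EuclideanSpace ℝ (Fin 3) → ℝ) =ᵐ[volume]
        fun x => if ‖x‖ ≤ (n : ℝ) then f x else 0)
    -- multiplication by η_{-α}
    (Mη : Lp ℝ 2 (volume : Measure (EuclideanSpace ℝ (Fin 3))) →L[ℝ]
          Lp ℝ 2 (volume : Measure (EuclideanSpace ℝ (Fin 3))))
    (hMη : ∀ f : Lp ℝ 2 (volume : Measure (EuclideanSpace ℝ (Fin 3))),
      (Mη f : EuclideanSpace ℝ (Fin 3) → ℝ) =ᵐ[volume]
        fun x => (if ‖x‖ ≤ 1 then 1 else ‖x‖ ^ (-α)) * f x)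
    (hGχ : ∀ n : ℕ, 1 ≤ n → ‖G.comp (Mχ n)‖ ≤ b * n) :
    ‖G.comp Mη‖ ≤ b * Real.sqrt (1 + ∑' n : ℕ, ((n : ℝ) + 2) ^ 2 * ((n : ℝ) + 1) ^ (-(2 * α))) := by
  have hα₀ : 0 ≤ α := by linarith
  have hc_lim : Tendsto (fun n : ℕ => max 1 (n : ℝ) ^ (-α)) atTop (𝓝 0) :=
    (tendsto_rpow_neg_atTop (by linarith)).comp
      (tendsto_atTop_mono (fun _ => le_max_right _ _) tendsto_natCast_atTop_atTop)
  rw [← tsum_succ_mul_max_one_rpow_sq hα]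
  exact IsBallCutoff.norm_comp_le hMχ hMη (fun n => by positivity)
    (fun n x hx => abs_ite_le_one_rpow_le hα₀ hx.le) hc_lim
    (summable_succ_mul_max_one_rpow_sq hα) fun n => by exact_mod_cast hGχ (n + 1) n.succ_pos

theorem green_times_eta_bounded (α b : ℝ) (hα : 3 / 2 < α) (hb : 0 < b)
    (G : Lp ℝ 2 (volume : Measure (EuclideanSpace ℝ (Fin 3))) →L[ℝ]
         Lp ℝ 2 (volume : Measure (EuclideanSpace ℝ (Fin 3))))
    -- G has a positive integral kernel: it is positivity preserving
    (hGpos : ∀ f : Lp ℝ 2 (volume : Measure (EuclideanSpace ℝ (Fin 3))),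
      (0 ≤ᵐ[volume] (f : EuclideanSpace ℝ (Fin 3) → ℝ)) →
      0 ≤ᵐ[volume] (G f : EuclideanSpace ℝ (Fin 3) → ℝ))
    -- multiplication by the indicator of the ball of radius n
    (Mχ : ℕ → (Lp ℝ 2 (volume : Measure (EuclideanSpace ℝ (Fin 3))) →L[ℝ]
               Lp ℝ 2 (volume : Measure (EuclideanSpace ℝ (Fin 3)))))
    (hMχ : ∀ (n : ℕ) (f : Lp ℝ 2 (volume : Measure (EuclideanSpace ℝ (Fin 3)))),
      (Mχ n f : EuclideanSpace ℝ (Fin 3) → ℝ) =ᵐ[volume]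
        fun x => if ‖x‖ ≤ (n : ℝ) then f x else 0)
    -- multiplication by η_{-α}
    (Mη : Lp ℝ 2 (volume : Measure (EuclideanSpace ℝ (Fin 3))) →L[ℝ]
          Lp ℝ 2 (volume : Measure (EuclideanSpace ℝ (Fin 3))))
    (hMη : ∀ f : Lp ℝ 2 (volume : Measure (EuclideanSpace ℝ (Fin 3))),
      (Mη f : EuclideanSpace ℝ (Fin 3) → ℝ) =ᵐ[volume]
        fun x => (if ‖x‖ ≤ 1 then 1 else ‖x‖ ^ (-α)) * f x)
    (hGχ : ∀ n : ℕ, 1 ≤ n → ‖G.comp (Mχ n)‖ ≤ b * n) :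
    ‖G.comp Mη‖ ≤ b * Real.sqrt (1 + ∑' n : ℕ, ((n : ℝ) + 2) ^ 2 * ((n : ℝ) + 1) ^ (-(2 * α))) :=
  green_times_eta_bounded_general α b hα G Mχ hMχ Mη hMη hGχ
end
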